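/- arXiv:1104.1606 — 3 statements merged into one kernel-verified Lean document; each statement's English description precedes it below -/
import Mathlib

section
/- For all x ≥ y > 0 and λ > 0, the quantity G(x,y) = (e^{-x√(2λ)} cosh(y√(2λ)) / √(2λ³)) · ((x√(2λ)+1)·tanh(y√(2λ)) − y√(2λ)) satisfies 0 ≤ G(x,y) ≤ √(2/λ)·x·y. -/
/-!
With `s = √(2λ)`, `a = x s` and `b = y s` we have `√(2λ³) = λ s` and `√(2/λ) x y = a b / √(2λ³)`,
so the claim is the dimensionless bound `0 ≤ e^{-a} cosh b ((a + 1) tanh b - b) ≤ a b` for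
`0 ≤ b ≤ a`. The bracket is nonnegative because `b cosh b ≤ (b + 1) sinh b`, and it is at most
`a b` because `tanh b ≤ b`; the prefactor `e^{-a} cosh b ≤ e^{b - a}` is at most `1`.
-/

open Real

namespace Real

lemma sinh_le_mul_cosh {b : ℝ} (hb : 0 ≤ b) : sinh b ≤ b * cosh b := by
  have hmono : Monotone fun t : ℝ ↦ t * cosh t - sinh t := by
    refine monotone_of_deriv_nonneg (by fun_prop) fun t ↦ ?_
    have hderiv : HasDerivAt (fun t : ℝ ↦ t * cosh t - sinh t) (t * sinh t) t :=
      (((hasDerivAt_id' t).mul (hasDerivAt_cosh t)).sub (hasDerivAt_sinh t)).congr_deriv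
        (by ring)
    rw [hderiv.deriv]
    rcases le_total 0 t with ht | ht
    · exact mul_nonneg ht (sinh_nonneg_iff.2 ht)
    · exact mul_nonneg_of_nonpos_of_nonpos ht (sinh_nonpos_iff.2 ht)
  simpa using hmono hb

lemma tanh_le_self {b : ℝ} (hb : 0 ≤ b) : tanh b ≤ b := by
  rw [tanh_eq_sinh_div_cosh, div_le_iff₀ (cosh_pos b)]
  exact sinh_le_mul_cosh hb

lemma mul_cosh_le_add_one_mul_sinh (b : ℝ) : b * cosh b ≤ (b + 1) * sinh b := by
  -- `(b + 1) sinh b - b cosh b = e^{-b} (e^{2b} - 1 - 2b) / 2`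
  have hexp : 1 + 2 * b ≤ exp b * exp b := by
    rw [← exp_add, ← two_mul]; linarith [add_one_le_exp (2 * b)]
  have key : (b + 1) * sinh b - b * cosh b = (exp b * exp b - (1 + 2 * b)) / (2 * exp b) := by
    rw [sinh_eq, cosh_eq, exp_neg]; field_simp; ring
  have : 0 ≤ (b + 1) * sinh b - b * cosh b := key ▸ div_nonneg (by linarith) (by positivity)
  linarith

lemma cosh_le_exp {b : ℝ} (hb : 0 ≤ b) : cosh b ≤ exp b := by
  linarith [cosh_add_sinh b, sinh_nonneg_iff.2 hb]

end Real

lemma add_one_mul_tanh_sub_nonneg {a b : ℝ} (hb : 0 ≤ b) (hba : b ≤ a) :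
    0 ≤ (a + 1) * tanh b - b := by
  rw [tanh_eq_sinh_div_cosh, mul_div_assoc', sub_nonneg, le_div_iff₀ (cosh_pos b)]
  calc b * cosh b ≤ (b + 1) * sinh b := mul_cosh_le_add_one_mul_sinh b
    _ ≤ (a + 1) * sinh b := by gcongr

lemma add_one_mul_tanh_sub_le {a b : ℝ} (hb : 0 ≤ b) (hba : b ≤ a) :
    (a + 1) * tanh b - b ≤ a * b := by
  have htanh := tanh_le_self hb
  nlinarith

lemma exp_neg_mul_cosh_le_one {a b : ℝ} (hb : 0 ≤ b) (hba : b ≤ a) : exp (-a) * cosh b ≤ 1 :=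
  calc exp (-a) * cosh b ≤ exp (-a) * exp b := by gcongr; exact cosh_le_exp hb
    _ = exp (b - a) := by rw [← exp_add]; ring_nf
    _ ≤ 1 := exp_le_one_iff.2 (by linarith)

lemma sqrt_two_div_mul_mul {lam : ℝ} (hlam : 0 < lam) (x y : ℝ) :
    √(2 / lam) * x * y = x * √(2 * lam) * (y * √(2 * lam)) / √(2 * lam ^ 3) := by
  have h3 : √(2 * lam ^ 3) = lam * √(2 * lam) := by
    rw [show 2 * lam ^ 3 = lam ^ 2 * (2 * lam) by ring, sqrt_mul (by positivity), sqrt_sq hlam.le]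
  have hdiv : √(2 / lam) = √(2 * lam) / lam := by
    rw [show 2 / lam = (2 * lam) / lam ^ 2 by field_simp, sqrt_div' _ (by positivity),
      sqrt_sq hlam.le]
  rw [h3, hdiv]
  field_simp

/-- For `x ≥ y > 0` and `λ > 0`, the quantity
`G(x,y) = (e^{-x√(2λ)} cosh(y√(2λ))/√(2λ³)) ((x√(2λ)+1) tanh(y√(2λ)) - y√(2λ))`
satisfies `0 ≤ G(x,y) ≤ √(2/λ) x y`. -/
theorem stmt9 (x y lam : ℝ) (hy : 0 < y) (hxy : y ≤ x) (hlam : 0 < lam) :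
    0 ≤ (Real.exp (-x * Real.sqrt (2 * lam)) * Real.cosh (y * Real.sqrt (2 * lam))
          / Real.sqrt (2 * lam ^ 3)) *
        ((x * Real.sqrt (2 * lam) + 1) * Real.tanh (y * Real.sqrt (2 * lam))
          - y * Real.sqrt (2 * lam)) ∧
    (Real.exp (-x * Real.sqrt (2 * lam)) * Real.cosh (y * Real.sqrt (2 * lam))
          / Real.sqrt (2 * lam ^ 3)) *
        ((x * Real.sqrt (2 * lam) + 1) * Real.tanh (y * Real.sqrt (2 * lam))
          - y * Real.sqrt (2 * lam))
      ≤ Real.sqrt (2 / lam) * x * y := by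
  rw [sqrt_two_div_mul_mul hlam, neg_mul, div_mul_eq_mul_div]
  set s := √(2 * lam)
  have hs : 0 < s := by positivity
  have hb : 0 ≤ y * s := by positivity
  have hba : y * s ≤ x * s := mul_le_mul_of_nonneg_right hxy hs.le
  have hbracket := add_one_mul_tanh_sub_nonneg hb hba
  constructor
  · exact div_nonneg (mul_nonneg (by positivity) hbracket) (by positivity)
  · refine div_le_div_of_nonneg_right ?_ (by positivity)
    calc exp (-(x * s)) * cosh (y * s) * ((x * s + 1) * tanh (y * s) - y * s)
        ≤ 1 * (x * s * (y * s)) :=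
          mul_le_mul (exp_neg_mul_cosh_le_one hb hba) (add_one_mul_tanh_sub_le hb hba) hbracket
            zero_le_one
      _ = x * s * (y * s) := one_mul _
end

section
/- For positive reals r₁, …, r_l, there is a constant C depending only on l such that ∫_ℝ ∏_{i=1}^l (1/r_i)·(1/(1+(x/√r_i)²)) dx ≤ C·√(min(r₁,…,r_l)) / ∏_{i=1}^l r_i. -/
/-!
Every factor `1 / (1 + (x / √rᵢ)²)` lies in `[0, 1]`, so the product is at most
`(∏ 1 / rᵢ) · 1 / (1 + (x / √m)²)` with `m = min rᵢ`, and this Cauchy profile of width `√m`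
integrates to `π √m`. Hence `C = π` works for every `l`.
-/

open MeasureTheory Real

theorem integral_inv_one_add_div_sq (a : ℝ) : ∫ x : ℝ, (1 + (x / a) ^ 2)⁻¹ = π * |a| := by
  rw [Measure.integral_comp_div (fun y : ℝ ↦ (1 + y ^ 2)⁻¹), integral_univ_inv_one_add_sq,
    smul_eq_mul, mul_comm]

theorem Finset.prod_le_of_nonneg_of_le_one {ι R : Type*} [CommMonoidWithZero R] [PartialOrder R]
    [ZeroLEOneClass R] [PosMulMono R] {s : Finset ι} {f : ι → R} {i : ι} (hi : i ∈ s)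
    (hf0 : ∀ j ∈ s, 0 ≤ f j) (hf1 : ∀ j ∈ s, f j ≤ 1) : ∏ j ∈ s, f j ≤ f i := by
  simpa using prod_le_prod_of_subset_of_le_one (singleton_subset_iff.2 hi) hf0 fun j hj _ ↦ hf1 j hj

section CauchyProduct

variable {ι : Type*} [Fintype ι] {r : ι → ℝ}

theorem inv_one_add_div_sqrt_sq_mem_Icc (x t : ℝ) :
    (1 + (x / √t) ^ 2)⁻¹ ∈ Set.Icc (0 : ℝ) 1 :=
  ⟨by positivity, inv_le_one_of_one_le₀ (le_add_of_nonneg_right (sq_nonneg _))⟩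

theorem prod_cauchy_le (hr : ∀ i, 0 < r i) (i₀ : ι) (x : ℝ) :
    ∏ i, 1 / r i * (1 / (1 + (x / √(r i)) ^ 2))
      ≤ (∏ i, 1 / r i) * (1 + (x / √(r i₀)) ^ 2)⁻¹ := by
  rw [Finset.prod_mul_distrib]
  refine mul_le_mul_of_nonneg_left ?_ (Finset.prod_nonneg fun i _ ↦ (one_div_pos.2 (hr i)).le)
  simp only [one_div]
  exact Finset.prod_le_of_nonneg_of_le_one (Finset.mem_univ i₀)
    (fun i _ ↦ (inv_one_add_div_sqrt_sq_mem_Icc x (r i)).1)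
    (fun i _ ↦ (inv_one_add_div_sqrt_sq_mem_Icc x (r i)).2)

theorem integral_prod_cauchy_le (hr : ∀ i, 0 < r i) (i₀ : ι) :
    ∫ x : ℝ, ∏ i, 1 / r i * (1 / (1 + (x / √(r i)) ^ 2)) ≤ π * √(r i₀) / ∏ i, r i := by
  have hsqrt : 0 < √(r i₀) := sqrt_pos.2 (hr i₀)
  have hdom : Integrable fun x : ℝ ↦ (∏ i, 1 / r i) * (1 + (x / √(r i₀)) ^ 2)⁻¹ :=
    (integrable_inv_one_add_sq.comp_div hsqrt.ne').const_mul _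
  calc ∫ x : ℝ, ∏ i, 1 / r i * (1 / (1 + (x / √(r i)) ^ 2))
      ≤ ∫ x : ℝ, (∏ i, 1 / r i) * (1 + (x / √(r i₀)) ^ 2)⁻¹ :=
        integral_mono_of_nonneg (.of_forall fun x ↦ Finset.prod_nonneg fun i _ ↦
            mul_nonneg (one_div_pos.2 (hr i)).le
              (by simpa only [one_div] using (inv_one_add_div_sqrt_sq_mem_Icc x (r i)).1))
          hdom (.of_forall (prod_cauchy_le hr i₀))
    _ = π * √(r i₀) / ∏ i, r i := by
        rw [integral_const_mul, integral_inv_one_add_div_sq, abs_of_pos hsqrt,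
          Finset.prod_div_distrib, Finset.prod_const_one]
        ring

end CauchyProduct

/-- For positive reals `r₁, …, r_l` there is a constant `C` depending only
on `l` such that `∫_ℝ ∏ (1/rᵢ)(1/(1+(x/√rᵢ)²)) dx ≤ C √(min rᵢ) / ∏ rᵢ`. -/
theorem stmt15 (l : ℕ) (hl : 0 < l) :
    ∃ C : ℝ, 0 < C ∧ ∀ r : Fin l → ℝ, (∀ i, 0 < r i) →
      ∫ x : ℝ, ∏ i, (1 / r i) * (1 / (1 + (x / Real.sqrt (r i)) ^ 2))
        ≤ C * Real.sqrt (sInf (Set.range r)) / ∏ i, r i := by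
  refine ⟨π, pi_pos, fun r hr ↦ ?_⟩
  have : Nonempty (Fin l) := ⟨⟨0, hl⟩⟩
  obtain ⟨i₀, hi₀⟩ : sInf (Set.range r) ∈ Set.range r :=
    (Set.range_nonempty r).csInf_mem (Set.finite_range r)
  rw [← hi₀]
  exact integral_prod_cauchy_le hr i₀
end

section
/- Let x, y > 0 and r > 0. Under the reflection-principle identity P^r_{x→y}(inf X ≥ 0) = 1 − e^{−2xy/r} for the Brownian bridge from x to y of duration r, one has ∫_0^∞ p_r(x,y)·e^{−λr}·(1 − e^{−2xy/r}) dr = (e^{−|x−y|√(2λ)}/√(2λ))·(1 − e^{−2√(2λ)·min(x,y)}), where p_r(x,y) = (2πr)^{−1/2}e^{−(x−y)²/(2r)}. -/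
/-!
Since `-(x - y)² / 2r - 2xy / r = -(x + y)² / 2r`, the integrand is
`(p_r(0, x - y) - p_r(0, x + y)) e^{-λr}`, so everything reduces to the Laplace transform
`∫₀^∞ p_r(0, a) e^{-λr} dr = e^{-|a|√(2λ)} / √(2λ)` together with
`x + y = |x - y| + 2 min x y`. Substituting `r = t²` and completing the square turns the
transform into `∫₀^∞ exp (-(c t - b / t)²) dt = √π / (2c)`. For `b > 0`, the substitution
`u = c t - b / t`, a bijection from `(0, ∞)` onto `ℝ`, gives
`∫₀^∞ (c + b / t²) exp (-(c t - b / t)²) dt = √π`, and the involution `t ↦ b / (c t)` shows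
that the two summands contribute equally.
-/

open MeasureTheory Set Real

noncomputable def heatKernel (r a : ℝ) : ℝ := 1 / √(2 * π * r) * exp (-a ^ 2 / (2 * r))

section ChangeOfVariables

variable {E : Type*} [NormedAddCommGroup E] [NormedSpace ℝ E]

theorem integral_Ioi_comp_sq (g : ℝ → E) :
    ∫ t in Ioi 0, (2 * t) • g (t ^ 2) = ∫ r in Ioi 0, g r := by
  rw [← integral_comp_rpow_Ioi_of_pos (g := g) two_pos]
  refine setIntegral_congr_fun measurableSet_Ioi fun t _ => ?_
  norm_num [rpow_two]

theorem integrableOn_Ioi_comp_sq_iff (g : ℝ → E) :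
    IntegrableOn (fun t => (2 * t) • g (t ^ 2)) (Ioi 0) ↔ IntegrableOn g (Ioi 0) := by
  rw [← integrableOn_Ioi_comp_rpow_iff g two_ne_zero]
  refine integrableOn_congr_fun (fun t _ => ?_) measurableSet_Ioi
  norm_num [rpow_two]

theorem integral_Ioi_div_sq_smul_comp_div {k : ℝ} (hk : 0 < k) (f : ℝ → E) :
    ∫ t in Ioi 0, (k / t ^ 2) • f (k / t) = ∫ t in Ioi 0, f t := by
  have hmaps : MapsTo (fun t => k / t) (Ioi 0) (Ioi 0) := fun t ht => div_pos hk ht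
  have hinv : ∀ t ∈ Ioi (0 : ℝ), k / (k / t) = t := fun t _ => div_div_cancel₀ hk.ne'
  have himage : (fun t => k / t) '' Ioi 0 = Ioi 0 :=
    hmaps.image_subset.antisymm fun t ht => ⟨k / t, hmaps ht, hinv t ht⟩
  have hderiv : ∀ t ∈ Ioi (0 : ℝ),
      HasDerivWithinAt (fun t => k / t) (-(k / t ^ 2)) (Ioi 0) t := fun t ht => by
    simpa [div_eq_mul_inv] using ((hasDerivAt_inv (ne_of_gt ht)).const_mul k).hasDerivWithinAt
  have hinj : InjOn (fun t => k / t) (Ioi 0) := fun s hs t ht hst => by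
    rw [← hinv s hs, ← hinv t ht]
    exact congrArg (k / ·) hst
  conv_rhs =>
    rw [← himage, integral_image_eq_integral_abs_deriv_smul measurableSet_Ioi hderiv hinj]
  refine setIntegral_congr_fun measurableSet_Ioi fun t ht => ?_
  rw [abs_neg, abs_of_pos (div_pos hk (pow_pos ht 2))]

end ChangeOfVariables

theorem sq_mul_sub_div {c b t : ℝ} (ht : t ≠ 0) :
    (c * t - b / t) ^ 2 = c ^ 2 * t ^ 2 + b ^ 2 / t ^ 2 - 2 * c * b := by
  field_simp
  ring

theorem integrableOn_exp_neg_sq_mul_sub_div {c : ℝ} (hc : c ≠ 0) (b : ℝ) :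
    IntegrableOn (fun t => exp (-(c * t - b / t) ^ 2)) (Ioi 0) := by
  have hgauss : Integrable fun t : ℝ => exp (2 * c * b) * exp (-c ^ 2 * t ^ 2) :=
    (integrable_exp_neg_mul_sq (by positivity)).const_mul _
  refine hgauss.integrableOn.mono' (by fun_prop) ((ae_restrict_iff' measurableSet_Ioi).2 ?_)
  refine Filter.Eventually.of_forall fun t ht => ?_
  rw [norm_of_nonneg (exp_pos _).le, ← exp_add, exp_le_exp, sq_mul_sub_div (ne_of_gt ht)]
  nlinarith [div_nonneg (sq_nonneg b) (sq_nonneg t)]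

theorem image_mul_sub_div_Ioi {c b : ℝ} (hc : 0 < c) (hb : 0 < b) :
    (fun t => c * t - b / t) '' Ioi 0 = univ := by
  refine eq_univ_of_forall fun u => ?_
  set D := √(u ^ 2 + 4 * c * b)
  have hD : D ^ 2 = u ^ 2 + 4 * c * b := sq_sqrt (by positivity)
  have huD : 0 < u + D := by nlinarith [sqrt_nonneg (u ^ 2 + 4 * c * b), mul_pos hc hb]
  refine ⟨(u + D) / (2 * c), mem_Ioi.2 (by positivity), ?_⟩
  field_simp
  nlinarith

theorem integral_deriv_mul_exp_neg_sq_mul_sub_div {c b : ℝ} (hc : 0 < c) (hb : 0 < b) :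
    IntegrableOn (fun t => (c + b / t ^ 2) * exp (-(c * t - b / t) ^ 2)) (Ioi 0) ∧
      ∫ t in Ioi 0, (c + b / t ^ 2) * exp (-(c * t - b / t) ^ 2) = √π := by
  have hderiv : ∀ t ∈ Ioi (0 : ℝ),
      HasDerivWithinAt (fun t => c * t - b / t) (c + b / t ^ 2) (Ioi 0) t := fun t ht => by
    have := ((hasDerivAt_id' t).const_mul c).fun_sub ((hasDerivAt_inv (ne_of_gt ht)).const_mul b)
    rw [show c + b / t ^ 2 = c * 1 - b * -(t ^ 2)⁻¹ by ring]
    simpa only [div_eq_mul_inv] using this.hasDerivWithinAt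
  have hinj : InjOn (fun t => c * t - b / t) (Ioi 0) := StrictMonoOn.injOn fun s hs t ht hst => by
    have : b / t < b / s := div_lt_div_of_pos_left hb hs hst
    show c * s - b / s < c * t - b / t
    nlinarith
  have habs : EqOn (fun t => |c + b / t ^ 2| • exp (-(c * t - b / t) ^ 2))
      (fun t => (c + b / t ^ 2) * exp (-(c * t - b / t) ^ 2)) (Ioi 0) := fun t ht => by
    simp only [smul_eq_mul, abs_of_pos (show 0 < c + b / t ^ 2 by positivity)]
  have hgauss : Integrable fun u : ℝ => exp (-u ^ 2) := by
    simpa using integrable_exp_neg_mul_sq one_pos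
  constructor
  · have := (integrableOn_image_iff_integrableOn_abs_deriv_smul measurableSet_Ioi hderiv hinj
      (fun u => exp (-u ^ 2))).1 (by rw [image_mul_sub_div_Ioi hc hb]; exact hgauss.integrableOn)
    exact this.congr_fun habs measurableSet_Ioi
  · have := integral_image_eq_integral_abs_deriv_smul measurableSet_Ioi hderiv hinj
      (fun u => exp (-u ^ 2))
    rw [image_mul_sub_div_Ioi hc hb, setIntegral_univ] at this
    rw [← setIntegral_congr_fun measurableSet_Ioi habs, ← this]
    simpa using integral_gaussian 1

theorem integral_exp_neg_sq_mul_sub_div {c b : ℝ} (hc : 0 < c) (hb : 0 ≤ b) :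
    ∫ t in Ioi 0, exp (-(c * t - b / t) ^ 2) = √π / (2 * c) := by
  rcases hb.eq_or_lt with rfl | hb
  · simp_rw [zero_div, sub_zero, mul_pow, ← neg_mul]
    rw [integral_gaussian_Ioi, sqrt_div pi_pos.le, sqrt_sq hc.le]
    ring
  set I := ∫ t in Ioi 0, exp (-(c * t - b / t) ^ 2)
  obtain ⟨hint_sum, hsum⟩ := integral_deriv_mul_exp_neg_sq_mul_sub_div hc hb
  have hint_c : IntegrableOn (fun t => c * exp (-(c * t - b / t) ^ 2)) (Ioi 0) :=
    (integrableOn_exp_neg_sq_mul_sub_div hc.ne' b).const_mul c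
  have hint_b : IntegrableOn (fun t => b / t ^ 2 * exp (-(c * t - b / t) ^ 2)) (Ioi 0) := by
    refine (hint_sum.sub hint_c).congr_fun (fun t _ => ?_) measurableSet_Ioi
    simp only [Pi.sub_apply]
    ring
  -- the involution `t ↦ b / (c t)` of `Ioi 0` reverses the sign of `c t - b / t`
  have hsymm : ∫ t in Ioi 0, b / t ^ 2 * exp (-(c * t - b / t) ^ 2) = c * I := by
    rw [← integral_const_mul, ← integral_Ioi_div_sq_smul_comp_div (div_pos hb hc)]
    refine setIntegral_congr_fun measurableSet_Ioi fun t ht => ?_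
    have ht : t ≠ 0 := ne_of_gt ht
    have hflip : c * (b / c / t) - b / (b / c / t) = -(c * t - b / t) := by
      field_simp
      ring
    rw [smul_eq_mul, hflip, neg_sq]
    field_simp
  have : (c + c) * I = √π := by
    rw [← hsum, add_mul]
    nth_rw 2 [← hsymm]
    rw [← integral_const_mul, ← integral_add hint_c hint_b]
    refine setIntegral_congr_fun measurableSet_Ioi fun t _ => ?_
    ring
  field_simp
  linarith

theorem two_mul_heatKernel_sq_mul_exp (a : ℝ) {lam t : ℝ} (hlam : 0 ≤ lam) (ht : 0 < t) :
    (2 * t) • (heatKernel (t ^ 2) a * exp (-lam * t ^ 2)) =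
      2 / √(2 * π) * exp (-|a| * √(2 * lam)) * exp (-(√lam * t - |a| / √2 / t) ^ 2) := by
  have hsqrt : √(2 * π * t ^ 2) = √(2 * π) * t := by
    rw [sqrt_mul (by positivity), sqrt_sq ht.le]
  have hexp : -a ^ 2 / (2 * t ^ 2) + -lam * t ^ 2 =
      -|a| * √(2 * lam) + -(√lam * t - |a| / √2 / t) ^ 2 := by
    rw [sq_mul_sub_div ht.ne', sq_sqrt hlam, div_pow, sq_sqrt zero_le_two, sq_abs,
      sqrt_mul zero_le_two]
    field_simp
    rw [sq_sqrt zero_le_two]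
    ring
  rw [heatKernel, hsqrt, smul_eq_mul, mul_assoc (1 / _), ← exp_add, hexp, exp_add]
  field_simp

theorem integrableOn_heatKernel_mul_exp (a : ℝ) {lam : ℝ} (hlam : 0 < lam) :
    IntegrableOn (fun r => heatKernel r a * exp (-lam * r)) (Ioi 0) := by
  rw [← integrableOn_Ioi_comp_sq_iff]
  refine IntegrableOn.congr_fun ((integrableOn_exp_neg_sq_mul_sub_div (sqrt_pos.2 hlam).ne'
      (|a| / √2)).const_mul (2 / √(2 * π) * exp (-|a| * √(2 * lam))))
    (fun t ht => ?_) measurableSet_Ioi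
  exact (two_mul_heatKernel_sq_mul_exp a hlam.le ht).symm

theorem integral_heatKernel_mul_exp (a : ℝ) {lam : ℝ} (hlam : 0 < lam) :
    ∫ r in Ioi 0, heatKernel r a * exp (-lam * r) = exp (-|a| * √(2 * lam)) / √(2 * lam) := by
  rw [← integral_Ioi_comp_sq, setIntegral_congr_fun measurableSet_Ioi
      fun t ht => two_mul_heatKernel_sq_mul_exp a hlam.le ht, integral_const_mul,
    integral_exp_neg_sq_mul_sub_div (sqrt_pos.2 hlam) (by positivity),
    sqrt_mul zero_le_two, sqrt_mul zero_le_two]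
  have : 0 < √π := sqrt_pos.2 pi_pos
  field_simp

theorem heatKernel_mul_one_sub_exp (r x y : ℝ) :
    heatKernel r (x - y) * (1 - exp (-2 * x * y / r)) =
      heatKernel r (x - y) - heatKernel r (x + y) := by
  have : exp (-(x - y) ^ 2 / (2 * r)) * exp (-2 * x * y / r) = exp (-(x + y) ^ 2 / (2 * r)) := by
    rw [← exp_add]
    ring_nf
  rw [heatKernel, heatKernel, ← this]
  ring

theorem abs_add_eq_abs_sub_add_two_mul_min {x y : ℝ} (hx : 0 ≤ x) (hy : 0 ≤ y) :
    |x + y| = |x - y| + 2 * min x y := by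
  rw [abs_of_nonneg (add_nonneg hx hy), ← max_sub_min_eq_abs']
  linarith [min_add_max x y]

/-- For `x, y > 0` and `λ > 0`,
`∫_0^∞ p_r(x,y) e^{-λr} (1 - e^{-2xy/r}) dr
  = (e^{-|x-y|√(2λ)}/√(2λ)) (1 - e^{-2√(2λ) min(x,y)})`. -/
theorem stmt19 (x y lam : ℝ) (hx : 0 < x) (hy : 0 < y) (hlam : 0 < lam) :
    ∫ r in Set.Ioi (0 : ℝ),
        (1 / Real.sqrt (2 * Real.pi * r)) * Real.exp (-(x - y) ^ 2 / (2 * r))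
          * Real.exp (-lam * r) * (1 - Real.exp (-2 * x * y / r))
      = (Real.exp (-|x - y| * Real.sqrt (2 * lam)) / Real.sqrt (2 * lam)) *
          (1 - Real.exp (-2 * Real.sqrt (2 * lam) * min x y)) := by
  have hsplit : ∀ r, heatKernel r (x - y) * exp (-lam * r) * (1 - exp (-2 * x * y / r)) =
      heatKernel r (x - y) * exp (-lam * r) - heatKernel r (x + y) * exp (-lam * r) :=
    fun r => by rw [mul_right_comm, heatKernel_mul_one_sub_exp, sub_mul]
  change ∫ r in Ioi 0, heatKernel r (x - y) * exp (-lam * r) * (1 - exp (-2 * x * y / r)) = _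
  simp_rw [hsplit]
  rw [integral_sub (integrableOn_heatKernel_mul_exp _ hlam)
      (integrableOn_heatKernel_mul_exp _ hlam),
    integral_heatKernel_mul_exp _ hlam, integral_heatKernel_mul_exp _ hlam,
    abs_add_eq_abs_sub_add_two_mul_min hx.le hy.le, neg_add, add_mul, exp_add,
    show -(2 * min x y) * √(2 * lam) = -2 * √(2 * lam) * min x y by ring]
  ring
end
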